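/- arXiv:math/0607089 — 3 statements merged into one kernel-verified Lean document; each statement's English description precedes it below -/
import Mathlib

section
/- Let (M,d) be a complete separable metric space, let μ, ν be Borel probability measures on M, and let c : M × M → [0,∞) be lower semicontinuous. Then there exists a coupling π* of μ and ν such that ∫ c dπ* = inf { ∫ c dπ : π a coupling of μ and ν }. In other words, the Kantorovich transportation problem admits a minimizer. -/
/-!
The couplings of `μ` and `ν` form a tight set of probability measures on `M × M`, because their
marginals are the two fixed measures and a single Borel probability measure on a Polish space is
tight. They form a closed set for the weak topology, since pushing forward along a projection is
continuous. By Prokhorov's theorem they are therefore compact. The cost `π ↦ ∫ c dπ` is lower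
semicontinuous: by the layer-cake formula it equals `∫₀^∞ π {c > t} dt`, each `{c > t}` is open, so
the portmanteau theorem bounds `π {c > t}` by a liminf, and Fatou's lemma moves the liminf outside
the integral. A lower semicontinuous function attains its minimum on a nonempty compact set.
-/

open MeasureTheory Set Filter Topology TopologicalSpace
open scoped ENNReal

/-- `IsCoupling π μ ν` means `π` is a probability measure on `M × M`
with first marginal `μ` and second marginal `ν`. -/
def IsCoupling {M : Type*} [MeasurableSpace M] (π : Measure (M × M))
    (μ ν : Measure M) : Prop :=
  IsProbabilityMeasure π ∧ π.map Prod.fst = μ ∧ π.map Prod.snd = ν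

section Portmanteau

variable {Ω : Type*} [MeasurableSpace Ω] [TopologicalSpace Ω] [OpensMeasurableSpace Ω]

theorem lintegral_le_liminf_lintegral_of_lowerSemicontinuous
    {μ : Measure Ω} {μs : ℕ → Measure Ω} {f : Ω → ℝ} (hf : LowerSemicontinuous f) (hf0 : 0 ≤ f)
    (h_opens : ∀ G, IsOpen G → μ G ≤ atTop.liminf (fun i ↦ μs i G)) :
    ∫⁻ x, ENNReal.ofReal (f x) ∂μ ≤
      atTop.liminf (fun i ↦ ∫⁻ x, ENNReal.ofReal (f x) ∂(μs i)) := by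
  simp_rw [lintegral_eq_lintegral_meas_lt _ (Eventually.of_forall hf0) hf.measurable.aemeasurable]
  calc ∫⁻ t in Ioi 0, μ {x | t < f x}
      ≤ ∫⁻ t in Ioi 0, atTop.liminf (fun i ↦ μs i {x | t < f x}) :=
        lintegral_mono fun t ↦ h_opens _ (hf.isOpen_preimage t)
    _ ≤ atTop.liminf (fun i ↦ ∫⁻ t in Ioi 0, μs i {x | t < f x}) :=
        lintegral_liminf_le fun i ↦ Antitone.measurable fun s t hst ↦
          measure_mono fun x hx ↦ hst.trans_lt hx

theorem ProbabilityMeasure.lowerSemicontinuous_lintegral [PseudoMetrizableSpace Ω]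
    [SeparableSpace Ω] {f : Ω → ℝ} (hf : LowerSemicontinuous f) (hf0 : 0 ≤ f) :
    LowerSemicontinuous fun π : ProbabilityMeasure Ω ↦ ∫⁻ x, ENNReal.ofReal (f x) ∂π := by
  -- The weak topology is metrizable, so sublevel sets may be tested along sequences,
  -- where Fatou's lemma is available.
  refine lowerSemicontinuous_iff_isClosed_preimage.2 fun a ↦ IsSeqClosed.isClosed ?_
  intro πs π hπs hlim
  calc ∫⁻ x, ENNReal.ofReal (f x) ∂π
      ≤ atTop.liminf (fun i ↦ ∫⁻ x, ENNReal.ofReal (f x) ∂(πs i)) :=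
        lintegral_le_liminf_lintegral_of_lowerSemicontinuous hf hf0
          fun G hG ↦ ProbabilityMeasure.le_liminf_measure_open_of_tendsto hlim hG
    _ ≤ a := liminf_le_of_frequently_le' (Frequently.of_forall hπs)

end Portmanteau

theorem ProbabilityMeasure.isClosed_setOf_map_eq {X Y : Type*} [MeasurableSpace X]
    [TopologicalSpace X] [OpensMeasurableSpace X] [MeasurableSpace Y] [TopologicalSpace Y]
    [HasOuterApproxClosed Y] [BorelSpace Y] {f : X → Y} (hf : Continuous f)
    (μ : Measure Y) [IsProbabilityMeasure μ] :
    IsClosed {π : ProbabilityMeasure X | (π : Measure X).map f = μ} := by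
  let μ' : ProbabilityMeasure Y := ⟨μ, ‹_›⟩
  convert isClosed_eq (ProbabilityMeasure.continuous_map hf) (continuous_const (y := μ')) using 1
  ext π
  exact ProbabilityMeasure.toMeasure_injective.eq_iff
    (a := π.map hf.measurable.aemeasurable) (b := μ')

section Couplings

variable {M : Type*} [MeasurableSpace M]

def couplings (μ ν : Measure M) : Set (ProbabilityMeasure (M × M)) :=
  {π | IsCoupling (π : Measure (M × M)) μ ν}

theorem isCoupling_prod (μ ν : Measure M) [IsProbabilityMeasure μ] [IsProbabilityMeasure ν] :
    IsCoupling (μ.prod ν) μ ν :=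
  ⟨inferInstance, by simp, by simp⟩

theorem nonempty_couplings (μ ν : Measure M) [IsProbabilityMeasure μ] [IsProbabilityMeasure ν] :
    (couplings μ ν).Nonempty :=
  ⟨⟨μ.prod ν, inferInstance⟩, isCoupling_prod μ ν⟩

variable [TopologicalSpace M] [SecondCountableTopology M] [BorelSpace M]

theorem isClosed_couplings [PseudoMetrizableSpace M] (μ ν : Measure M) [IsProbabilityMeasure μ]
    [IsProbabilityMeasure ν] : IsClosed (couplings μ ν) := by
  have h := (ProbabilityMeasure.isClosed_setOf_map_eq continuous_fst μ).inter
    (ProbabilityMeasure.isClosed_setOf_map_eq continuous_snd ν)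
  convert h using 1
  ext π
  exact and_iff_right π.prop

theorem isTightMeasureSet_couplings [IsCompletelyPseudoMetrizableSpace M] (μ ν : Measure M)
    [IsProbabilityMeasure μ] [IsProbabilityMeasure ν] :
    IsTightMeasureSet {(π : Measure (M × M)) | π ∈ couplings μ ν} := by
  refine IsTightMeasureSet.prodMk ((isTightMeasureSet_singleton (μ := μ)).subset ?_)
    ((isTightMeasureSet_singleton (μ := ν)).subset ?_)
  · rintro _ ⟨_, ⟨π, hπ, rfl⟩, rfl⟩
    exact hπ.2.1
  · rintro _ ⟨_, ⟨π, hπ, rfl⟩, rfl⟩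
    exact hπ.2.2

theorem isCompact_couplings [IsCompletelyPseudoMetrizableSpace M] [T2Space M] (μ ν : Measure M)
    [IsProbabilityMeasure μ] [IsProbabilityMeasure ν] : IsCompact (couplings μ ν) := by
  rw [← (isClosed_couplings μ ν).closure_eq]
  exact isCompact_closure_of_isTightMeasureSet (isTightMeasureSet_couplings μ ν)

end Couplings

/-- Kantorovich minimizer exists for a lower semicontinuous nonnegative cost. -/
theorem kantorovich_minimizer_exists
    {M : Type*} [MetricSpace M] [CompleteSpace M] [TopologicalSpace.SeparableSpace M]
    [MeasurableSpace M] [BorelSpace M]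
    (μ ν : Measure M) [IsProbabilityMeasure μ] [IsProbabilityMeasure ν]
    (c : M × M → ℝ) (hc0 : ∀ p, 0 ≤ c p) (hc : LowerSemicontinuous c) :
    ∃ πs : Measure (M × M), IsCoupling πs μ ν ∧
      (∫⁻ p, ENNReal.ofReal (c p) ∂πs) =
        ⨅ (π : Measure (M × M)) (_ : IsCoupling π μ ν),
          ∫⁻ p, ENNReal.ofReal (c p) ∂π := by
  have hcost := (ProbabilityMeasure.lowerSemicontinuous_lintegral hc hc0).lowerSemicontinuousOn
    (couplings μ ν)
  obtain ⟨π, hπ, hmin⟩ := hcost.exists_isMinOn (nonempty_couplings μ ν) (isCompact_couplings μ ν)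
  refine ⟨π, hπ, le_antisymm (le_iInf₂ fun ρ hρ ↦ ?_) (iInf₂_le (π : Measure (M × M)) hπ)⟩
  exact hmin (show ⟨ρ, hρ.1⟩ ∈ couplings μ ν from hρ)
end

section
/- Let (M,d) be a complete separable metric space, c(x,y) = C(d(x,y)) with C : [0,∞) → [0,∞) non-decreasing, continuous, C(0) = 0, and let μ_n, μ be Borel probability measures on M with ∫ C(2 d(x,a)) dμ_n < ∞ and ∫ C(2 d(x,a)) dμ < ∞ for some a ∈ M. If μ_n converges weakly to μ and ∫ C(2 d(x,a)) dμ_n → ∫ C(2 d(x,a)) dμ, then T_c(μ_n, μ) → 0, where T_c is the minimal transportation cost with cost c. -/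
open MeasureTheory Set Filter
open scoped ENNReal BoundedContinuousFunction

/-- The Kantorovich minimal transportation cost for the cost `c(x,y) = C(d(x,y))`. -/
noncomputable def transportCost {M : Type*} [MetricSpace M] [MeasurableSpace M]
    (C : ℝ → ℝ) (μ ν : Measure M) : ℝ≥0∞ :=
  ⨅ (π : Measure (M × M)) (_ : IsCoupling π μ ν),
    ∫⁻ p, ENNReal.ofReal (C (dist p.1 p.2)) ∂π

section Coupling

variable {M : Type*} [MeasurableSpace M]

lemma map_finset_sum_measure {α β : Type*} [MeasurableSpace α] [MeasurableSpace β]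
    {f : α → β} (hf : Measurable f) (s : Finset ℕ) (μ : ℕ → Measure α) :
    (∑ i ∈ s, μ i).map f = ∑ i ∈ s, (μ i).map f := by
  classical
  induction s using Finset.induction_on with
  | empty => simp
  | insert _ _ h ih =>
    rw [Finset.sum_insert h, Finset.sum_insert h, Measure.map_add _ _ hf, ih]

lemma coupling_bound
    {p q : Measure M} [IsProbabilityMeasure p] [IsProbabilityMeasure q]
    (F : M × M → ℝ≥0∞)
    (g : M → ℝ≥0∞) (hg : Measurable g)
    (N : ℕ) (A : ℕ → Set M) (hAmeas : ∀ k, MeasurableSet (A k))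
    (hAdisj : Pairwise (Function.onFun Disjoint A))
    (B K : ℝ≥0∞)
    (hdiag : ∀ k < N, ∀ x ∈ A k, ∀ y ∈ A k, F (x, y) ≤ B)
    (hdom : ∀ x y, F (x, y) ≤ g x + g y) :
    ∃ π : Measure (M × M), IsCoupling π p q ∧
      ∫⁻ z, F z ∂π ≤ B + (K * (1 - ∑ k ∈ Finset.range N, min (p (A k)) (q (A k)))
          + ∫⁻ x, (g x - K) ∂p)
        + (K * (1 - ∑ k ∈ Finset.range N, min (p (A k)) (q (A k)))
          + ∫⁻ x, (g x - K) ∂q) := by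
  classical
  set m : ℕ → ℝ≥0∞ := fun k => min (p (A k)) (q (A k)) with hm
  set s : ℝ≥0∞ := ∑ k ∈ Finset.range N, m k with hs
  -- basic facts about m
  have hmp : ∀ k, m k ≤ p (A k) := fun k => min_le_left _ _
  have hmq : ∀ k, m k ≤ q (A k) := fun k => min_le_right _ _
  have hmfin : ∀ k, m k ≠ ∞ := fun k => ((hmp k).trans_lt (measure_lt_top p _)).ne
  have hpfin : ∀ k, p (A k) ≠ ∞ := fun k => (measure_lt_top p _).ne
  have hqfin : ∀ k, q (A k) ≠ ∞ := fun k => (measure_lt_top q _).ne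
  -- the diagonal-marginal measures
  set α : Measure M := ∑ k ∈ Finset.range N, (m k / p (A k)) • p.restrict (A k) with hα
  set β : Measure M := ∑ k ∈ Finset.range N, (m k / q (A k)) • q.restrict (A k) with hβ
  -- generic facts, proved for any measure
  have key : ∀ (u : Measure M), IsProbabilityMeasure u → (∀ k, m k ≤ u (A k)) →
      (∑ k ∈ Finset.range N, (m k / u (A k)) • u.restrict (A k)) ≤ u ∧
      (∑ k ∈ Finset.range N, (m k / u (A k)) • u.restrict (A k)) univ = s := by
    intro u hu hmu
    have hufin : ∀ k, u (A k) ≠ ∞ := fun k => (measure_lt_top u _).ne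
    have hcoef : ∀ k, m k / u (A k) ≤ 1 := by
      intro k
      calc m k / u (A k) ≤ u (A k) / u (A k) :=
            ENNReal.div_le_div_right (hmu k) _
        _ ≤ 1 := ENNReal.div_self_le_one
    constructor
    · refine Measure.le_iff.mpr fun t ht => ?_
      calc (∑ k ∈ Finset.range N, (m k / u (A k)) • u.restrict (A k)) t
          = ∑ k ∈ Finset.range N, (m k / u (A k)) * u.restrict (A k) t := by
            simp [Measure.finset_sum_apply]
        _ ≤ ∑ k ∈ Finset.range N, u.restrict (A k) t := by
            refine Finset.sum_le_sum fun k _ => ?_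
            calc (m k / u (A k)) * u.restrict (A k) t ≤ 1 * u.restrict (A k) t :=
                  mul_le_mul_left (hcoef k) _
              _ = u.restrict (A k) t := one_mul _
        _ = ∑ k ∈ Finset.range N, u (t ∩ A k) := by
            refine Finset.sum_congr rfl fun k _ => Measure.restrict_apply ht
        _ = u (⋃ k ∈ Finset.range N, t ∩ A k) := by
            refine (measure_biUnion_finset ?_ fun k _ => ht.inter (hAmeas k)).symm
            intro i _ j _ hij
            exact ((hAdisj hij).mono inf_le_right inf_le_right)
        _ ≤ u t := measure_mono (by simp [iUnion_subset_iff, inter_subset_left])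
    · calc (∑ k ∈ Finset.range N, (m k / u (A k)) • u.restrict (A k)) univ
          = ∑ k ∈ Finset.range N, (m k / u (A k)) * u (A k) := by
            simp [Measure.finset_sum_apply, Measure.restrict_apply_univ]
        _ = s := by
            refine Finset.sum_congr rfl fun k _ => ?_
            by_cases h0 : u (A k) = 0
            · have : m k = 0 := le_antisymm (h0 ▸ hmu k) (zero_le)
              simp [this, h0]
            · exact ENNReal.div_mul_cancel h0 (hufin k)
  obtain ⟨hαle, hαuniv⟩ := key p inferInstance hmp
  obtain ⟨hβle, hβuniv⟩ := key q inferInstance hmq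
  have hs1 : s ≤ 1 := by
    calc s ≤ ∑ k ∈ Finset.range N, p (A k) := Finset.sum_le_sum fun k _ => hmp k
      _ = p (⋃ k ∈ Finset.range N, A k) :=
          (measure_biUnion_finset (fun i _ j _ hij => hAdisj hij) fun k _ => hAmeas k).symm
      _ ≤ 1 := prob_le_one
  have hsfin : s ≠ ∞ := (hs1.trans_lt ENNReal.one_lt_top).ne
  haveI : IsFiniteMeasure α := ⟨by rw [hαuniv]; exact hsfin.lt_top⟩
  haveI : IsFiniteMeasure β := ⟨by rw [hβuniv]; exact hsfin.lt_top⟩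
  set ρ : Measure M := p - α with hρdef
  set τ : Measure M := q - β with hτdef
  have hρadd : ρ + α = p := Measure.sub_add_cancel_of_le hαle
  have hτadd : τ + β = q := Measure.sub_add_cancel_of_le hβle
  have hρu : ρ univ = 1 - s := by
    have := congrArg (fun ν : Measure M => ν univ) hρadd
    simp only [Measure.add_apply, hαuniv, measure_univ] at this
    exact ENNReal.eq_sub_of_add_eq hsfin (by rw [← hαuniv]; exact this)
  have hτu : τ univ = 1 - s := by
    have := congrArg (fun ν : Measure M => ν univ) hτadd
    simp only [Measure.add_apply, hβuniv, measure_univ] at this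
    exact ENNReal.eq_sub_of_add_eq hsfin (by rw [← hβuniv]; exact this)
  have hρfin : ρ univ ≠ ∞ := by rw [hρu]; exact (tsub_le_self.trans_lt ENNReal.one_lt_top).ne
  haveI : IsFiniteMeasure ρ := ⟨hρfin.lt_top⟩
  haveI : IsFiniteMeasure τ := ⟨by rw [hτu]; exact (tsub_le_self.trans_lt ENNReal.one_lt_top).lt_top⟩
  -- the coupling
  set c : ℕ → ℝ≥0∞ := fun k => m k / (p (A k) * q (A k)) with hc
  set π : Measure (M × M) :=
    (∑ k ∈ Finset.range N, c k • ((p.restrict (A k)).prod (q.restrict (A k))))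
      + (ρ univ)⁻¹ • (ρ.prod τ) with hπ
  -- coefficient computations
  have hcq : ∀ k, c k * q (A k) = m k / p (A k) := by
    intro k
    by_cases hq0 : q (A k) = 0
    · have hm0 : m k = 0 := le_antisymm (hq0 ▸ hmq k) (zero_le)
      simp [hc, hm0, hq0]
    · calc c k * q (A k) = m k * (p (A k))⁻¹ * ((q (A k))⁻¹ * q (A k)) := by
            simp only [hc]
            rw [div_eq_mul_inv, ENNReal.mul_inv (Or.inr (hqfin k)) (Or.inl (hpfin k))]
            ring
        _ = m k / p (A k) := by
            rw [ENNReal.inv_mul_cancel hq0 (hqfin k), mul_one, div_eq_mul_inv]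
  have hcp : ∀ k, c k * p (A k) = m k / q (A k) := by
    intro k
    by_cases hp0 : p (A k) = 0
    · have hm0 : m k = 0 := le_antisymm (hp0 ▸ hmp k) (zero_le)
      simp [hc, hm0, hp0]
    · calc c k * p (A k) = m k * (q (A k))⁻¹ * ((p (A k))⁻¹ * p (A k)) := by
            simp only [hc]
            rw [div_eq_mul_inv, ENNReal.mul_inv (Or.inr (hqfin k)) (Or.inl (hpfin k))]
            ring
        _ = m k / q (A k) := by
            rw [ENNReal.inv_mul_cancel hp0 (hpfin k), mul_one, div_eq_mul_inv]
  -- marginals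
  have hfst : π.map Prod.fst = p := by
    rw [hπ, Measure.map_add _ _ measurable_fst, map_finset_sum_measure measurable_fst,
      Measure.map_smul]
    have h1 : ∀ k ∈ Finset.range N,
        (c k • ((p.restrict (A k)).prod (q.restrict (A k)))).map Prod.fst
          = (m k / p (A k)) • p.restrict (A k) := by
      intro k _
      rw [Measure.map_smul, Measure.map_fst_prod, Measure.restrict_apply_univ, smul_smul, hcq]
    rw [Finset.sum_congr rfl h1]
    have h2 : (ρ univ)⁻¹ • (ρ.prod τ).map Prod.fst = ρ := by
      rw [Measure.map_fst_prod, hτu, ← hρu, smul_smul]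
      by_cases hρ0 : ρ univ = 0
      · rw [Measure.measure_univ_eq_zero.mp hρ0]
        simp
      · rw [ENNReal.inv_mul_cancel hρ0 hρfin, one_smul]
    rw [h2, ← hα, ← hρadd, add_comm]
  have hsnd : π.map Prod.snd = q := by
    rw [hπ, Measure.map_add _ _ measurable_snd, map_finset_sum_measure measurable_snd,
      Measure.map_smul]
    have h1 : ∀ k ∈ Finset.range N,
        (c k • ((p.restrict (A k)).prod (q.restrict (A k)))).map Prod.snd
          = (m k / q (A k)) • q.restrict (A k) := by
      intro k _
      rw [Measure.map_smul, Measure.map_snd_prod, Measure.restrict_apply_univ, smul_smul, hcp]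
    rw [Finset.sum_congr rfl h1]
    have h2 : (ρ univ)⁻¹ • (ρ.prod τ).map Prod.snd = τ := by
      rw [Measure.map_snd_prod, smul_smul]
      by_cases hρ0 : ρ univ = 0
      · have hτ0 : τ univ = 0 := by rw [hτu, ← hρu, hρ0]
        rw [Measure.measure_univ_eq_zero.mp hτ0]
        simp
      · rw [ENNReal.inv_mul_cancel hρ0 hρfin, one_smul]
    rw [h2, ← hβ, ← hτadd, add_comm]
  have hπuniv : π univ = 1 := by
    have : π univ = (π.map Prod.fst) univ := by
      rw [Measure.map_apply measurable_fst MeasurableSet.univ, preimage_univ]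
    rw [this, hfst, measure_univ]
  refine ⟨π, ⟨⟨hπuniv⟩, hfst, hsnd⟩, ?_⟩
  -- cost estimate
  have hptwise : ∀ b : ℝ≥0∞, b ≤ min b K + (b - K) := by
    intro b
    rcases le_total b K with h | h
    · simp [min_eq_left h]
    · rw [min_eq_right h, add_tsub_cancel_of_le h]
  have hXbound : ∀ (u w : Measure M), w ≤ u → w univ = 1 - s →
      ∫⁻ x, g x ∂w ≤ K * (1 - s) + ∫⁻ x, (g x - K) ∂u := by
    intro u w hwu hwuniv
    calc ∫⁻ x, g x ∂w ≤ ∫⁻ x, (min (g x) K + (g x - K)) ∂w :=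
          lintegral_mono fun x => hptwise (g x)
      _ = ∫⁻ x, min (g x) K ∂w + ∫⁻ x, (g x - K) ∂w :=
          lintegral_add_left (hg.min measurable_const) _
      _ ≤ K * (1 - s) + ∫⁻ x, (g x - K) ∂u := by
          gcongr
          · calc ∫⁻ x, min (g x) K ∂w ≤ ∫⁻ _, K ∂w := lintegral_mono fun x => min_le_right _ _
              _ = K * (1 - s) := by rw [lintegral_const, hwuniv]
  calc ∫⁻ z, F z ∂π
      = (∑ k ∈ Finset.range N, c k * ∫⁻ z, F z ∂((p.restrict (A k)).prod (q.restrict (A k))))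
        + (ρ univ)⁻¹ * ∫⁻ z, F z ∂(ρ.prod τ) := by
        rw [hπ, lintegral_add_measure, lintegral_finset_sum_measure]
        simp only [lintegral_smul_measure, smul_eq_mul]
    _ ≤ B + ((ρ univ)⁻¹ * ∫⁻ z, F z ∂(ρ.prod τ)) := by
        gcongr
        calc ∑ k ∈ Finset.range N, c k * ∫⁻ z, F z ∂((p.restrict (A k)).prod (q.restrict (A k)))
            ≤ ∑ k ∈ Finset.range N, B * m k := by
              refine Finset.sum_le_sum fun k hk => ?_
              have hFB : ∫⁻ z, F z ∂((p.restrict (A k)).prod (q.restrict (A k)))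
                  ≤ B * (p (A k) * q (A k)) := by
                rw [Measure.prod_restrict]
                calc ∫⁻ z in A k ×ˢ A k, F z ∂(p.prod q)
                    ≤ ∫⁻ _ in A k ×ˢ A k, B ∂(p.prod q) :=
                      setLIntegral_mono measurable_const fun z hz =>
                        hdiag k (Finset.mem_range.mp hk) z.1 hz.1 z.2 hz.2
                  _ = B * (p (A k) * q (A k)) := by
                      rw [setLIntegral_const, Measure.prod_prod]
              calc c k * ∫⁻ z, F z ∂((p.restrict (A k)).prod (q.restrict (A k)))
                  ≤ c k * (B * (p (A k) * q (A k))) := mul_le_mul_right hFB _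
                _ = B * (c k * (p (A k) * q (A k))) := by ring
                _ ≤ B * m k := by
                    gcongr
                    by_cases h0 : p (A k) * q (A k) = 0
                    · simp [h0]
                    · simp only [hc]
                      rw [ENNReal.div_mul_cancel h0 (ENNReal.mul_ne_top (hpfin k) (hqfin k))]
          _ = B * s := by rw [← Finset.mul_sum]
          _ ≤ B * 1 := mul_le_mul_right hs1 _
          _ = B := mul_one _
    _ ≤ B + ((∫⁻ x, g x ∂ρ) + (∫⁻ x, g x ∂τ)) := by
        gcongr
        have hdecomp : ∫⁻ z, F z ∂(ρ.prod τ)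
            ≤ ρ univ * ((∫⁻ x, g x ∂ρ) + (∫⁻ x, g x ∂τ)) := by
          calc ∫⁻ z, F z ∂(ρ.prod τ) ≤ ∫⁻ z, (g z.1 + g z.2) ∂(ρ.prod τ) :=
                lintegral_mono fun z => hdom z.1 z.2
            _ = ∫⁻ z, g z.1 ∂(ρ.prod τ) + ∫⁻ z, g z.2 ∂(ρ.prod τ) :=
                lintegral_add_left (hg.comp measurable_fst) _
            _ = τ univ * ∫⁻ x, g x ∂ρ + ρ univ * ∫⁻ x, g x ∂τ := by
                rw [← lintegral_map hg measurable_fst, ← lintegral_map hg measurable_snd,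
                  Measure.map_fst_prod, Measure.map_snd_prod, lintegral_smul_measure,
                  lintegral_smul_measure, smul_eq_mul, smul_eq_mul]
            _ = ρ univ * ((∫⁻ x, g x ∂ρ) + (∫⁻ x, g x ∂τ)) := by
                rw [hτu, ← hρu, mul_add]
        calc (ρ univ)⁻¹ * ∫⁻ z, F z ∂(ρ.prod τ)
            ≤ (ρ univ)⁻¹ * (ρ univ * ((∫⁻ x, g x ∂ρ) + (∫⁻ x, g x ∂τ))) :=
              mul_le_mul_right hdecomp _
          _ ≤ (∫⁻ x, g x ∂ρ) + (∫⁻ x, g x ∂τ) := by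
              by_cases hρ0 : ρ univ = 0
              · simp [hρ0]
              · rw [← mul_assoc, ENNReal.inv_mul_cancel hρ0 hρfin, one_mul]
    _ ≤ B + ((K * (1 - s) + ∫⁻ x, (g x - K) ∂p) + (K * (1 - s) + ∫⁻ x, (g x - K) ∂q)) := by
        gcongr
        · exact hXbound p ρ (Measure.sub_le) hρu
        · exact hXbound q τ (Measure.sub_le) hτu
    _ = B + (K * (1 - s) + ∫⁻ x, (g x - K) ∂p) + (K * (1 - s) + ∫⁻ x, (g x - K) ∂q) := by
        ring

end Coupling

section Partition

open Metric TopologicalSpace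

lemma exists_good_partition {M : Type*} [MetricSpace M] [SeparableSpace M] [Nonempty M]
    [MeasurableSpace M] [BorelSpace M]
    (μ : Measure M) [IsProbabilityMeasure μ] {δ : ℝ} (hδ : 0 < δ) :
    ∃ A : ℕ → Set M, (∀ k, MeasurableSet (A k)) ∧ Pairwise (Function.onFun Disjoint A) ∧
      (⋃ k, A k) = univ ∧ (∀ k, μ (frontier (A k)) = 0) ∧
      ∀ k, ∀ x ∈ A k, ∀ y ∈ A k, dist x y < δ := by
  obtain ⟨xs, hxs⟩ := exists_dense_seq M
  have h43 : δ / 4 < δ / 3 := by linarith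
  choose r hr hrnull using fun k =>
    MeasureTheory.exists_null_frontier_thickening μ ({xs k} : Set M) h43
  set B : ℕ → Set M := fun k => ball (xs k) (r k) with hB
  have hBnull : ∀ k, μ (frontier (B k)) = 0 := by
    intro k
    have := hrnull k
    rwa [Metric.thickening_singleton] at this
  have hBunion : (⋃ k, B k) = univ := by
    rw [eq_univ_iff_forall]
    intro x
    obtain ⟨k, hk⟩ := Metric.denseRange_iff.mp hxs x (δ / 4) (by linarith)
    exact mem_iUnion.mpr ⟨k, lt_trans hk (hr k).1⟩
  refine ⟨disjointed B, fun k => MeasurableSet.disjointed (fun k => measurableSet_ball) k,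
    disjoint_disjointed B, by rw [iUnion_disjointed, hBunion], ?_, ?_⟩
  · -- null frontiers
    have hUnull : ∀ n : ℕ, μ (frontier (⋃ i < n, B i)) = 0 := by
      intro n
      induction n with
      | zero => simp
      | succ n ih =>
        rw [biUnion_lt_succ]
        have hsub : frontier ((⋃ i < n, B i) ∪ B n)
            ⊆ frontier (⋃ i < n, B i) ∪ frontier (B n) :=
          (frontier_union_subset _ _).trans
            (union_subset_union inter_subset_left inter_subset_right)
        exact measure_mono_null hsub (measure_union_null ih (hBnull n))
    intro k
    rw [disjointed_eq_inter_compl]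
    have hsub : frontier (B k ∩ ⋂ i < k, (B i)ᶜ)
        ⊆ frontier (B k) ∪ frontier (⋃ i < k, B i) := by
      refine (frontier_inter_subset _ _).trans ?_
      refine union_subset_union inter_subset_left ?_
      refine inter_subset_right.trans ?_
      rw [← compl_iUnion₂, frontier_compl]
    exact measure_mono_null hsub (measure_union_null (hBnull k) (hUnull k))
  · intro k x hx y hy
    have hx' : x ∈ B k := disjointed_subset B k hx
    have hy' : y ∈ B k := disjointed_subset B k hy
    rw [hB, mem_ball] at hx' hy'
    calc dist x y ≤ dist x (xs k) + dist y (xs k) := dist_triangle_right _ _ _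
      _ < r k + r k := by exact add_lt_add hx' hy'
      _ < δ := by have := (hr k).2; linarith

end Partition

theorem tendsto_transportCost_of_weak_and_moments
    {M : Type*} [MetricSpace M] [CompleteSpace M] [TopologicalSpace.SeparableSpace M]
    [MeasurableSpace M] [BorelSpace M]
    (C : ℝ → ℝ) (hmono : MonotoneOn C (Ici 0)) (hcont : ContinuousOn C (Ici 0))
    (hC0 : C 0 = 0) (hCnonneg : ∀ x ∈ Ici (0:ℝ), 0 ≤ C x)
    (μn : ℕ → Measure M) (μ : Measure M)
    [∀ n, IsProbabilityMeasure (μn n)] [IsProbabilityMeasure μ]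
    (a : M)
    (hint_n : ∀ n, Integrable (fun x => C (2 * dist x a)) (μn n))
    (hint : Integrable (fun x => C (2 * dist x a)) μ)
    (hweak : ∀ f : M →ᵇ ℝ,
      Tendsto (fun n => ∫ x, f x ∂(μn n)) atTop (nhds (∫ x, f x ∂μ)))
    (hmom : Tendsto (fun n => ∫ x, C (2 * dist x a) ∂(μn n)) atTop
      (nhds (∫ x, C (2 * dist x a) ∂μ))) :
    Tendsto (fun n => transportCost C (μn n) μ) atTop (nhds 0) := by
  classical
  have hM : Nonempty M := ⟨a⟩
  set f : M → ℝ := fun x => C (2 * dist x a) with hfdef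
  have hf_cont : Continuous f := by
    have h2 : Continuous fun x : M => 2 * dist x a := by continuity
    exact hcont.comp_continuous h2 (fun x => mem_Ici.mpr (by positivity))
  have hf_nonneg : ∀ x, 0 ≤ f x := fun x => hCnonneg _ (mem_Ici.mpr (by positivity))
  set g : M → ℝ≥0∞ := fun x => ENNReal.ofReal (f x) with hgdef
  have hg_meas : Measurable g := ENNReal.measurable_ofReal.comp hf_cont.measurable
  set F : M × M → ℝ≥0∞ := fun z => ENNReal.ofReal (C (dist z.1 z.2)) with hFdef
  have hdom : ∀ x y : M, F (x, y) ≤ g x + g y := by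
    intro x y
    have hd : dist x y ≤ 2 * max (dist x a) (dist y a) := by
      have h1 := dist_triangle x a y
      have h2 : dist a y = dist y a := dist_comm a y
      have h3 := le_max_left (dist x a) (dist y a)
      have h4 := le_max_right (dist x a) (dist y a)
      linarith
    have h1 : C (dist x y) ≤ C (2 * max (dist x a) (dist y a)) :=
      hmono (mem_Ici.mpr dist_nonneg) (mem_Ici.mpr (by positivity)) hd
    have h2 : C (2 * max (dist x a) (dist y a)) ≤ C (2 * dist x a) + C (2 * dist y a) := by
      rcases max_cases (dist x a) (dist y a) with ⟨he, _⟩ | ⟨he, _⟩ <;> rw [he]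
      · linarith [hf_nonneg y]
      · linarith [hf_nonneg x]
    calc F (x, y) ≤ ENNReal.ofReal (C (2 * dist x a) + C (2 * dist y a)) :=
          ENNReal.ofReal_le_ofReal (h1.trans h2)
      _ ≤ g x + g y := ENNReal.ofReal_add_le
  -- weak convergence as probability measures
  set P : ℕ → ProbabilityMeasure M := fun n => ⟨μn n, inferInstance⟩ with hP
  set Q : ProbabilityMeasure M := ⟨μ, inferInstance⟩ with hQ
  have hPQ : Tendsto P atTop (nhds Q) := by
    rw [ProbabilityMeasure.tendsto_iff_forall_integral_tendsto]
    exact hweak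
  rw [ENNReal.tendsto_nhds_zero]
  intro ε hε
  suffices h : ∀ᶠ n in atTop, transportCost C (μn n) μ ≤ min ε 1 by
    exact h.mono fun n hn => hn.trans (min_le_left _ _)
  set ε' : ℝ≥0∞ := min ε 1 with hε'def
  have hε'pos : 0 < ε' := lt_min hε zero_lt_one
  have hε'top : ε' ≠ ∞ := ((min_le_right _ _).trans_lt ENNReal.one_lt_top).ne
  set ε5 : ℝ≥0∞ := ε' / 5 with hε5def
  have hε5pos : 0 < ε5 := ENNReal.div_pos hε'pos.ne' (by norm_num)
  have hε5top : ε5 ≠ ∞ := by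
    exact (ENNReal.div_lt_top hε'top (by norm_num)).ne
  set η : ℝ := ε5.toReal with hηdef
  have hηpos : 0 < η := ENNReal.toReal_pos hε5pos.ne' hε5top
  have hηle : ENNReal.ofReal η ≤ ε5 := by
    rw [hηdef, ENNReal.ofReal_toReal hε5top]
  -- δ from continuity of C at 0
  obtain ⟨δ, hδpos, hδ⟩ : ∃ δ > 0, ∀ t : ℝ, t ∈ Ici (0:ℝ) → dist t 0 < δ → dist (C t) (C 0) < η := by
    have h := Metric.continuousWithinAt_iff.mp (hcont 0 (mem_Ici.mpr le_rfl)) η hηpos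
    obtain ⟨δ, hδpos, hδ⟩ := h
    exact ⟨δ, hδpos, fun t ht hlt => hδ ht hlt⟩
  -- partition
  obtain ⟨A, hAmeas, hAdisj, hAunion, hAnull, hAdiam⟩ := exists_good_partition μ hδpos
  have hdiagbound : ∀ k, ∀ x ∈ A k, ∀ y ∈ A k, F (x, y) ≤ ENNReal.ofReal η := by
    intro k x hx y hy
    have hdxy : dist (dist x y) 0 < δ := by
      rw [Real.dist_eq, sub_zero, abs_of_nonneg dist_nonneg]
      exact hAdiam k x hx y hy
    have hC : dist (C (dist x y)) (C 0) < η := hδ _ (mem_Ici.mpr dist_nonneg) hdxy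
    rw [hC0, Real.dist_eq, sub_zero] at hC
    exact ENNReal.ofReal_le_ofReal ((le_abs_self _).trans hC.le)
  -- choice of the truncation level K
  have htrunc : Tendsto (fun j : ℕ => ∫ x, min (f x) (j : ℝ) ∂μ) atTop (nhds (∫ x, f x ∂μ)) := by
    refine tendsto_integral_of_dominated_convergence f
      (fun j => (hf_cont.min continuous_const).aestronglyMeasurable) hint ?_ ?_
    · intro j
      refine Eventually.of_forall fun x => ?_
      rw [Real.norm_eq_abs, abs_of_nonneg (le_min (hf_nonneg x) (Nat.cast_nonneg j))]
      exact min_le_left _ _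
    · refine Eventually.of_forall fun x => ?_
      refine tendsto_atTop_of_eventually_const (i₀ := ⌈f x⌉₊) fun j hj => ?_
      exact min_eq_left ((Nat.le_ceil _).trans (Nat.cast_le.mpr hj))
  obtain ⟨K', hK'⟩ : ∃ j : ℕ, ∫ x, f x ∂μ - ∫ x, min (f x) (j:ℝ) ∂μ < η := by
    have h0 : Tendsto (fun j : ℕ => ∫ x, f x ∂μ - ∫ x, min (f x) (j:ℝ) ∂μ) atTop (nhds 0) := by
      have := (tendsto_const_nhds (x := ∫ x, f x ∂μ) (f := atTop (α := ℕ))).sub htrunc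
      rwa [sub_self] at this
    exact (h0.eventually_lt_const hηpos).exists
  set Kr : ℝ := (K' : ℝ) with hKrdef
  have hKr0 : 0 ≤ Kr := Nat.cast_nonneg _
  set Φ : M →ᵇ ℝ := BoundedContinuousFunction.mkOfBound
    ⟨fun x => min (f x) Kr, hf_cont.min continuous_const⟩ Kr (by
      intro x y
      show dist (min (f x) Kr) (min (f y) Kr) ≤ Kr
      rw [Real.dist_eq, abs_sub_le_iff]
      constructor
      · have h1 : min (f x) Kr ≤ Kr := min_le_right _ _
        have h2 : 0 ≤ min (f y) Kr := le_min (hf_nonneg y) hKr0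
        linarith
      · have h1 : min (f y) Kr ≤ Kr := min_le_right _ _
        have h2 : 0 ≤ min (f x) Kr := le_min (hf_nonneg x) hKr0
        linarith) with hΦdef
  have hΦeq : ∀ x : M, Φ x = min (f x) Kr := fun _ => rfl
  set K : ℝ≥0∞ := ENNReal.ofReal Kr with hKdef
  have hKfin : K ≠ ∞ := ENNReal.ofReal_ne_top
  -- the tail bound, valid for any probability measure
  have hGbound : ∀ (ν : Measure M), IsProbabilityMeasure ν → Integrable f ν →
      ∫⁻ x, (g x - K) ∂ν ≤ ENNReal.ofReal (∫ x, f x ∂ν - ∫ x, Φ x ∂ν) := by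
    intro ν hν hfν
    haveI := hν
    have hΦi : Integrable (fun x => Φ x) ν := Φ.integrable ν
    have hsubi : Integrable (fun x => f x - Φ x) ν := hfν.sub hΦi
    have h1 : ∀ x, g x - K ≤ ENNReal.ofReal (f x - Φ x) := by
      intro x
      show ENNReal.ofReal (f x) - ENNReal.ofReal Kr ≤ ENNReal.ofReal (f x - Φ x)
      rw [← ENNReal.ofReal_sub _ hKr0]
      refine ENNReal.ofReal_le_ofReal ?_
      simp only [hΦeq]
      have := min_le_right (f x) Kr
      linarith
    calc ∫⁻ x, (g x - K) ∂ν ≤ ∫⁻ x, ENNReal.ofReal (f x - Φ x) ∂ν := lintegral_mono h1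
      _ = ENNReal.ofReal (∫ x, (f x - Φ x) ∂ν) :=
          (ofReal_integral_eq_lintegral_ofReal hsubi
            (Eventually.of_forall fun x => by
              simp only [Pi.zero_apply, hΦeq]
              linarith [min_le_left (f x) Kr])).symm
      _ = ENNReal.ofReal (∫ x, f x ∂ν - ∫ x, Φ x ∂ν) := by rw [integral_sub hfν hΦi]
  have hμK : ∫⁻ x, (g x - K) ∂μ ≤ ε5 := by
    refine (hGbound μ inferInstance hint).trans ?_
    refine (ENNReal.ofReal_le_ofReal ?_).trans hηle
    have : ∫ x, Φ x ∂μ = ∫ x, min (f x) Kr ∂μ := by simp only [hΦeq]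
    rw [this]
    exact hK'.le
  have hμnK : ∀ᶠ n in atTop, ∫⁻ x, (g x - K) ∂(μn n) ≤ ε5 := by
    have hT2 := hweak Φ
    have hT : Tendsto (fun n => ∫ x, f x ∂(μn n) - ∫ x, Φ x ∂(μn n)) atTop
        (nhds (∫ x, f x ∂μ - ∫ x, Φ x ∂μ)) := hmom.sub hT2
    have hlim_lt : ∫ x, f x ∂μ - ∫ x, Φ x ∂μ < η := by
      have : ∫ x, Φ x ∂μ = ∫ x, min (f x) Kr ∂μ := by simp only [hΦeq]
      rw [this]
      exact hK'
    filter_upwards [hT.eventually_lt_const hlim_lt] with n hn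
    exact (hGbound (μn n) inferInstance (hint_n n)).trans
      ((ENNReal.ofReal_le_ofReal hn.le).trans hηle)
  -- choice of δ' and N
  set δ' : ℝ≥0∞ := ε5 / (K + 1) with hδ'def
  have hδ'pos : 0 < δ' :=
    ENNReal.div_pos hε5pos.ne' (by simp [hKdef, ENNReal.add_ne_top, ENNReal.ofReal_ne_top])
  have hKδ' : K * δ' ≤ ε5 := by
    calc K * δ' ≤ (K + 1) * (ε5 / (K + 1)) := by gcongr; exact le_self_add
      _ ≤ ε5 := ENNReal.mul_div_le
  have hStend : Tendsto (fun N : ℕ => μ (⋃ k ∈ Finset.range N, A k)) atTop (nhds 1) := by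
    have hmono' : Monotone fun N : ℕ => ⋃ k ∈ Finset.range N, A k := by
      intro i j hij
      exact biUnion_subset_biUnion_left (Finset.range_subset_range.mpr hij)
    have h := tendsto_measure_iUnion_atTop (μ := μ) hmono'
    have huniv : (⋃ N : ℕ, ⋃ k ∈ Finset.range N, A k) = univ := by
      rw [← hAunion]
      apply subset_antisymm
      · exact iUnion_subset fun N => iUnion₂_subset fun k _ => subset_iUnion A k
      · intro x hx
        obtain ⟨k, hk⟩ := mem_iUnion.mp hx
        exact mem_iUnion.mpr ⟨k + 1, mem_biUnion (Finset.self_mem_range_succ k) hk⟩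
    rwa [huniv, measure_univ] at h
  have hopen : IsOpen {x : ℝ≥0∞ | 1 < x + δ' / 2} :=
    isOpen_lt continuous_const (continuous_id.add continuous_const)
  obtain ⟨N, hN⟩ : ∃ N : ℕ, 1 < μ (⋃ k ∈ Finset.range N, A k) + δ' / 2 := by
    refine (hStend.eventually (hopen.mem_nhds ?_)).exists
    exact ENNReal.lt_add_right ENNReal.one_ne_top (ENNReal.half_pos hδ'pos.ne').ne'
  have hsum_eq : μ (⋃ k ∈ Finset.range N, A k) = ∑ k ∈ Finset.range N, μ (A k) :=
    measure_biUnion_finset (fun i _ j _ h => hAdisj h) (fun k _ => hAmeas k)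
  -- convergence of masses
  have hμnk : ∀ k, Tendsto (fun n => μn n (A k)) atTop (nhds (μ (A k))) := by
    intro k
    have hnull : Q (frontier (A k)) = 0 :=
      (ProbabilityMeasure.null_iff_toMeasure_null Q (frontier (A k))).mpr (hAnull k)
    have h := ProbabilityMeasure.tendsto_measure_of_null_frontier_of_tendsto hPQ hnull
    have h2 := ENNReal.tendsto_coe.mpr h
    exact (by simpa [ProbabilityMeasure.ennreal_coeFn_eq_coeFn_toMeasure] using h2 :
      Tendsto (fun n => ((P n : Measure M) (A k))) atTop (nhds ((Q : Measure M) (A k))))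
  have hmass_t : Tendsto (fun n => ∑ k ∈ Finset.range N, min (μn n (A k)) (μ (A k))) atTop
      (nhds (∑ k ∈ Finset.range N, μ (A k))) := by
    have h : ∀ k ∈ Finset.range N, Tendsto (fun n => min (μn n (A k)) (μ (A k))) atTop
        (nhds (min (μ (A k)) (μ (A k)))) := fun k _ => (hμnk k).min tendsto_const_nhds
    simpa [min_self] using tendsto_finset_sum _ h
  have hmass : ∀ᶠ n in atTop,
      1 ≤ (∑ k ∈ Finset.range N, min (μn n (A k)) (μ (A k))) + δ' := by
    have hmem : (∑ k ∈ Finset.range N, μ (A k)) ∈ {x : ℝ≥0∞ | 1 < x + δ' / 2} := by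
      rw [mem_setOf_eq, ← hsum_eq]
      exact hN
    filter_upwards [hmass_t.eventually (hopen.mem_nhds hmem)] with n hn
    calc (1:ℝ≥0∞) ≤ (∑ k ∈ Finset.range N, min (μn n (A k)) (μ (A k))) + δ' / 2 := hn.le
      _ ≤ (∑ k ∈ Finset.range N, min (μn n (A k)) (μ (A k))) + δ' :=
        add_le_add_right ENNReal.half_le_self _
  -- final assembly
  filter_upwards [hμnK, hmass] with n h1 h2
  obtain ⟨π, hπc, hπb⟩ := coupling_bound (p := μn n) (q := μ) F g hg_meas N A hAmeas hAdisj
    (ENNReal.ofReal η) K (fun k _ x hx y hy => hdiagbound k x hx y hy) hdom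
  have hts : 1 - (∑ k ∈ Finset.range N, min (μn n (A k)) (μ (A k))) ≤ δ' :=
    tsub_le_iff_right.mpr (by rw [add_comm]; exact h2)
  have hKt : K * (1 - ∑ k ∈ Finset.range N, min (μn n (A k)) (μ (A k))) ≤ ε5 :=
    (mul_le_mul_right hts K).trans hKδ'
  calc transportCost C (μn n) μ ≤ ∫⁻ z, F z ∂π := iInf₂_le π hπc
    _ ≤ ENNReal.ofReal η
        + (K * (1 - ∑ k ∈ Finset.range N, min (μn n (A k)) (μ (A k)))
          + ∫⁻ x, (g x - K) ∂(μn n))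
        + (K * (1 - ∑ k ∈ Finset.range N, min (μn n (A k)) (μ (A k)))
          + ∫⁻ x, (g x - K) ∂μ) := hπb
    _ ≤ ε5 + (ε5 + ε5) + (ε5 + ε5) :=
        add_le_add (add_le_add hηle (add_le_add hKt h1)) (add_le_add hKt hμK)
    _ = ε5 * 5 := by ring
    _ = ε' := by
        rw [hε5def, ENNReal.div_mul_cancel (by norm_num) (by norm_num)]
end

section
/- Let (M,d) be a complete separable metric space, C : [0,∞) → [0,∞) non-decreasing, continuous, C(0) = 0, satisfying the doubling condition C(2y) ≤ λ C(y) for all y ≥ 0. Let μ_n, μ be Borel probability measures with ∫ C(2d(x,a)) dμ_n < ∞ and ∫ C(2d(x,a)) dμ < ∞ for some a ∈ M. If T_c(μ_n, μ) → 0 with c(x,y) = C(d(x,y)), then ∫ C(d(x,a)) dμ_n → ∫ C(d(x,a)) dμ. -/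
/-!
Fix a coupling `π` of `μₙ` and `μ` of small cost and write `F = C (d(·, a))`. For `e > 0` and
`R ≥ 0` there are `η > 0` and `L` with
`|F x - F y| ≤ e + L C(d(x, y)) + (λ + 1) 1{d(y, a) > R} F y`:
near the diagonal and inside the ball this is uniform continuity of `C` on `[0, R + 1]`; if
`d(y, a) > R` it is the doubling bound `C(d(x, a)) ≤ λ (C(d(x, y)) + C(d(y, a)))`; and if
`d(x, y) > η` while `d(y, a) ≤ R`, then `F y ≤ C(R) ≤ (C(R) / C(η)) C(d(x, y))`.
Integrating against `π` bounds `|∫ F dμₙ - ∫ F dμ|` by `e + L T_c(μₙ, μ)` plus `(λ + 1)` times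
the integral of `F` over `{d(·, a) > R}` against `μ`, which is small for large `R` since
`∫ F dμ ≤ ∫ C(2 d(·, a)) dμ < ∞`. This needs `C(η) > 0`; if instead `C` vanishes at some
positive point, doubling forces `C = 0` on `[0, ∞)` and both sides are `0`.
-/

open MeasureTheory Set Filter
open scoped ENNReal BoundedContinuousFunction

section Doubling

variable {C : ℝ → ℝ} {lam : ℝ}

theorem apply_two_pow_mul_le_of_doubling (hlam : 0 ≤ lam)
    (hdbl : ∀ y : ℝ, 0 ≤ y → C (2 * y) ≤ lam * C y) (k : ℕ) {y : ℝ} (hy : 0 ≤ y) :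
    C (2 ^ k * y) ≤ lam ^ k * C y := by
  induction k with
  | zero => simp
  | succ k ih =>
    calc C (2 ^ (k + 1) * y) = C (2 * (2 ^ k * y)) := by ring_nf
      _ ≤ lam * C (2 ^ k * y) := hdbl _ (by positivity)
      _ ≤ lam * (lam ^ k * C y) := mul_le_mul_of_nonneg_left ih hlam
      _ = lam ^ (k + 1) * C y := by ring

theorem eqOn_zero_or_pos_of_doubling (hmono : MonotoneOn C (Ici 0))
    (hCnonneg : ∀ x ∈ Ici (0:ℝ), 0 ≤ C x) (hlam : 0 ≤ lam)
    (hdbl : ∀ y : ℝ, 0 ≤ y → C (2 * y) ≤ lam * C y) :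
    EqOn C 0 (Ici 0) ∨ ∀ t, 0 < t → 0 < C t := by
  refine or_iff_not_imp_right.2 fun h y hy => ?_
  push Not at h
  obtain ⟨t, ht, hCt⟩ := h
  obtain ⟨k, hk⟩ := pow_unbounded_of_one_lt (y / t) one_lt_two
  have hyk : y ≤ 2 ^ k * t := ((div_lt_iff₀ ht).1 hk).le
  refine le_antisymm ?_ (hCnonneg y hy)
  calc C y ≤ C (2 ^ k * t) := hmono hy (hy.trans hyk) hyk
    _ ≤ lam ^ k * C t := apply_two_pow_mul_le_of_doubling hlam hdbl k ht.le
    _ ≤ 0 := mul_nonpos_of_nonneg_of_nonpos (pow_nonneg hlam k) hCt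

theorem le_mul_add_of_doubling (hmono : MonotoneOn C (Ici 0))
    (hCnonneg : ∀ x ∈ Ici (0:ℝ), 0 ≤ C x) (hlam : 0 ≤ lam)
    (hdbl : ∀ y : ℝ, 0 ≤ y → C (2 * y) ≤ lam * C y) {s t u : ℝ} (hs : 0 ≤ s) (ht : 0 ≤ t)
    (hu : 0 ≤ u) (hstu : s ≤ t + u) : C s ≤ lam * (C t + C u) := by
  have hmax : 0 ≤ max t u := le_max_of_le_left ht
  calc C s ≤ C (2 * max t u) :=
        hmono hs (mem_Ici.2 (by linarith)) (by linarith [le_max_left t u, le_max_right t u])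
    _ ≤ lam * C (max t u) := hdbl _ hmax
    _ ≤ lam * (C t + C u) := by
        refine mul_le_mul_of_nonneg_left ?_ hlam
        rcases max_cases t u with ⟨h, _⟩ | ⟨h, _⟩ <;> rw [h] <;>
          linarith [hCnonneg t ht, hCnonneg u hu]

theorem exists_le_add_of_doubling (hmono : MonotoneOn C (Ici 0))
    (hcont : ContinuousOn C (Ici 0)) (hCnonneg : ∀ x ∈ Ici (0:ℝ), 0 ≤ C x) (hlam : 0 ≤ lam)
    (hdbl : ∀ y : ℝ, 0 ≤ y → C (2 * y) ≤ lam * C y) (hpos : ∀ t, 0 < t → 0 < C t)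
    {R e : ℝ} (hR : 0 ≤ R) (he : 0 < e) :
    ∃ L, 0 < L ∧ ∀ s t u, 0 ≤ s → 0 ≤ t → s ≤ u + t → t ≤ u + s →
      C s ≤ C t + (e + (lam + 1) * (Ioi R).indicator C t + L * C u) ∧
      C t ≤ C s + (e + (lam + 1) * (Ioi R).indicator C t + L * C u) := by
  have hunif : UniformContinuousOn C (Icc 0 (R + 1)) :=
    isCompact_Icc.uniformContinuousOn_of_continuous (hcont.mono fun x hx => hx.1)
  obtain ⟨η₀, hη₀, hmod⟩ := Metric.uniformContinuousOn_iff.1 hunif e he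
  set η := min (η₀ / 2) 1
  have hη : 0 < η := lt_min (half_pos hη₀) one_pos
  have hCη := hpos η hη
  set q := C R / C η
  have hq : 0 ≤ q := div_nonneg (hCnonneg R hR) hCη.le
  set L := (lam + 1) * (1 + q)
  have hlamL : lam + 1 ≤ L := le_mul_of_one_le_right (by linarith) (by linarith)
  refine ⟨L, by linarith, fun s t u hs ht hstu hts => ?_⟩
  have hu : 0 ≤ u := by linarith
  have hCs := hCnonneg s hs
  have hCt := hCnonneg t ht
  have hCu := hCnonneg u hu
  have hsub := le_mul_add_of_doubling hmono hCnonneg hlam hdbl hs ht hu (by linarith)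
  have hLu : (lam + 1) * C u ≤ L * C u := mul_le_mul_of_nonneg_right hlamL hCu
  rcases le_or_gt t R with htR | hRt
  · rw [indicator_of_notMem (notMem_Ioi.2 htR), mul_zero, add_zero]
    rcases le_or_gt u η with huη | hηu
    · have hclose : dist s t < η₀ := by
        rw [Real.dist_eq, abs_lt]
        constructor <;> linarith [min_le_left (η₀ / 2) 1]
      have := hmod s ⟨hs, by linarith [min_le_right (η₀ / 2) 1]⟩ t ⟨ht, by linarith⟩ hclose
      rw [Real.dist_eq, abs_lt] at this
      constructor <;> nlinarith
    · have hMarkov : C t ≤ q * C u :=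
        calc C t ≤ C R := hmono ht hR htR
          _ = q * C η := (div_mul_cancel₀ _ hCη.ne').symm
          _ ≤ q * C u := mul_le_mul_of_nonneg_left (hmono hη.le hu hηu.le) hq
      have hqL : (lam + 1) * (q * C u) ≤ L * C u := by nlinarith
      constructor <;> nlinarith
  · rw [indicator_of_mem (mem_Ioi.2 hRt)]
    constructor <;> nlinarith

end Doubling

namespace IsCoupling

variable {M : Type*} [MeasurableSpace M] {π : Measure (M × M)} {μ ν : Measure M}
  {f : M → ℝ≥0∞}

theorem lintegral_fst (hπ : IsCoupling π μ ν) (hf : Measurable f) :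
    ∫⁻ p, f p.1 ∂π = ∫⁻ x, f x ∂μ := by
  rw [← hπ.2.1, lintegral_map hf measurable_fst]

theorem lintegral_snd (hπ : IsCoupling π μ ν) (hf : Measurable f) :
    ∫⁻ p, f p.2 ∂π = ∫⁻ x, f x ∂ν := by
  rw [← hπ.2.2, lintegral_map hf measurable_snd]

end IsCoupling

theorem le_add_mul_transportCost {M : Type*} [MetricSpace M] [MeasurableSpace M]
    {C : ℝ → ℝ} {μ ν : Measure M} {A B L : ℝ≥0∞} (hL₀ : L ≠ 0) (hL : L ≠ ∞)
    (h : ∀ π, IsCoupling π μ ν → A ≤ B + L * ∫⁻ p, ENNReal.ofReal (C (dist p.1 p.2)) ∂π) :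
    A ≤ B + L * transportCost C μ ν := by
  simp only [transportCost, ENNReal.mul_iInf_of_ne hL₀ hL, ENNReal.add_iInf]
  exact le_iInf₂ h

theorem tendsto_setLIntegral_compl_closedBall {M : Type*} [PseudoMetricSpace M]
    [MeasurableSpace M] [OpensMeasurableSpace M] {μ : Measure M} {f : M → ℝ≥0∞}
    (hf : ∫⁻ x, f x ∂μ ≠ ∞) (a : M) :
    Tendsto (fun R : ℝ => ∫⁻ x in (Metric.closedBall a R)ᶜ, f x ∂μ) atTop (nhds 0) := by
  have hmeas (R : ℝ) : MeasurableSet (Metric.closedBall a R)ᶜ :=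
    Metric.isClosed_closedBall.measurableSet.compl
  have h := tendsto_measure_iInter_atTop (μ := μ.withDensity f)
    (s := fun R : ℝ => (Metric.closedBall a R)ᶜ) (fun R => (hmeas R).nullMeasurableSet)
    (fun R R' hRR' => compl_subset_compl.2 (Metric.closedBall_subset_closedBall hRR'))
    ⟨0, by
      rw [withDensity_apply _ (hmeas 0)]
      exact ne_top_of_le_ne_top hf (setLIntegral_le_lintegral _ _)⟩
  have hempty : ⋂ R : ℝ, (Metric.closedBall a R)ᶜ = ∅ :=
    eq_empty_of_forall_notMem fun x hx =>
      mem_iInter.1 hx (dist x a) (Metric.mem_closedBall.2 le_rfl)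
  simpa only [hempty, measure_empty, Function.comp_def, withDensity_apply _ (hmeas _)] using h

theorem ENNReal.tendsto_of_le_add_mul {α : Type*} {l : Filter α} {x t : α → ℝ≥0∞} {b : ℝ≥0∞}
    (hb : b ≠ ∞) (ht : Tendsto t l (nhds 0))
    (h : ∀ ε > 0, ∃ L ≠ ∞, ∀ i, x i ≤ b + (ε + L * t i) ∧ b ≤ x i + (ε + L * t i)) :
    Tendsto x l (nhds b) := by
  refine (ENNReal.tendsto_nhds hb).2 fun ε hε => ?_
  obtain ⟨L, hL, hx⟩ := h (ε / 2) (ENNReal.half_pos hε.ne')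
  have hLt : Tendsto (fun i => L * t i) l (nhds 0) := by
    simpa using ENNReal.Tendsto.const_mul ht (Or.inr hL)
  filter_upwards [hLt.eventually (ge_mem_nhds (ENNReal.half_pos hε.ne'))] with i hi
  have herr : ε / 2 + L * t i ≤ ε := by
    calc ε / 2 + L * t i ≤ ε / 2 + ε / 2 := by gcongr
      _ = ε := ENNReal.add_halves ε
  exact ⟨tsub_le_iff_right.2 ((hx i).2.trans (by gcongr)), (hx i).1.trans (by gcongr)⟩

theorem lintegral_le_add_transportCost {M : Type*} [MetricSpace M] [MeasurableSpace M]
    [OpensMeasurableSpace M] {C : ℝ → ℝ} (hcont : ContinuousOn C (Ici 0)) (a : M) {e k L R : ℝ}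
    (hk : 0 ≤ k) (hL : 0 < L)
    (hC : ∀ x y : M,
      C (dist x a) ≤ C (dist y a) +
          (e + k * (Ioi R).indicator C (dist y a) + L * C (dist x y)) ∧
        C (dist y a) ≤ C (dist x a) +
          (e + k * (Ioi R).indicator C (dist y a) + L * C (dist x y)))
    (ν μ : Measure M) :
    ∫⁻ x, ENNReal.ofReal (C (dist x a)) ∂ν ≤ ∫⁻ x, ENNReal.ofReal (C (dist x a)) ∂μ +
        (ENNReal.ofReal e +
          ENNReal.ofReal k * ∫⁻ x in (Metric.closedBall a R)ᶜ, ENNReal.ofReal (C (dist x a)) ∂μ +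
          ENNReal.ofReal L * transportCost C ν μ) ∧
      ∫⁻ x, ENNReal.ofReal (C (dist x a)) ∂μ ≤ ∫⁻ x, ENNReal.ofReal (C (dist x a)) ∂ν +
        (ENNReal.ofReal e +
          ENNReal.ofReal k * ∫⁻ x in (Metric.closedBall a R)ᶜ, ENNReal.ofReal (C (dist x a)) ∂μ +
          ENNReal.ofReal L * transportCost C ν μ) := by
  set F : M → ℝ≥0∞ := fun x => ENNReal.ofReal (C (dist x a))
  set c : M × M → ℝ≥0∞ := fun p => ENNReal.ofReal (C (dist p.1 p.2))
  set G := (Metric.closedBall a R)ᶜ.indicator F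
  set Φ : M × M → ℝ≥0∞ := fun p =>
    ENNReal.ofReal e + ENNReal.ofReal k * G p.2 + ENNReal.ofReal L * c p
  have hF : Measurable F := (ENNReal.continuous_ofReal.comp (hcont.comp_continuous
    (continuous_id.dist continuous_const) fun _ => dist_nonneg)).measurable
  have hball : MeasurableSet (Metric.closedBall a R)ᶜ :=
    Metric.isClosed_closedBall.measurableSet.compl
  have hG : Measurable G := hF.indicator hball
  have hF₁ : Measurable fun p : M × M => F p.1 := hF.comp measurable_fst
  have hF₂ : Measurable fun p : M × M => F p.2 := hF.comp measurable_snd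
  have hG₂ : Measurable fun p : M × M => G p.2 := hG.comp measurable_snd
  have hΦ_ge (x y : M) :
      ENNReal.ofReal (e + k * (Ioi R).indicator C (dist y a) + L * C (dist x y)) ≤ Φ (x, y) := by
    have hind : ENNReal.ofReal ((Ioi R).indicator C (dist y a)) = G y := by
      by_cases h : R < dist y a <;> simp [G, F, indicator, h]
    refine ENNReal.ofReal_add_le.trans (add_le_add (ENNReal.ofReal_add_le.trans ?_) ?_)
    · rw [ENNReal.ofReal_mul hk, hind]
    · rw [ENNReal.ofReal_mul hL.le]
  have hΦ (π : Measure (M × M)) (hπ : IsCoupling π ν μ) :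
      ∫⁻ p, Φ p ∂π = ENNReal.ofReal e + ENNReal.ofReal k * ∫⁻ x in (Metric.closedBall a R)ᶜ, F x ∂μ
        + ENNReal.ofReal L * ∫⁻ p, c p ∂π := by
    have := hπ.1
    simp only [Φ]
    rw [lintegral_add_left (f := fun p : M × M => ENNReal.ofReal e + ENNReal.ofReal k * G p.2)
        (measurable_const.add (hG₂.const_mul _)),
      lintegral_add_left measurable_const, lintegral_const, measure_univ, mul_one,
      lintegral_const_mul _ hG₂, lintegral_const_mul' _ _ ENNReal.ofReal_ne_top,
      hπ.lintegral_snd hG, lintegral_indicator hball]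
  constructor <;> rw [← add_assoc] <;>
    refine le_add_mul_transportCost (ENNReal.ofReal_pos.2 hL).ne' ENNReal.ofReal_ne_top
      fun π hπ => ?_ <;>
    rw [← hπ.lintegral_fst hF, ← hπ.lintegral_snd hF, add_assoc, ← hΦ π hπ]
  · rw [← lintegral_add_left hF₂]
    exact lintegral_mono fun p => (ENNReal.ofReal_le_ofReal (hC p.1 p.2).1).trans
      (ENNReal.ofReal_add_le.trans (add_le_add le_rfl (hΦ_ge p.1 p.2)))
  · rw [← lintegral_add_left hF₁]
    exact lintegral_mono fun p => (ENNReal.ofReal_le_ofReal (hC p.1 p.2).2).trans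
      (ENNReal.ofReal_add_le.trans (add_le_add le_rfl (hΦ_ge p.1 p.2)))

theorem tendsto_lintegral_of_tendsto_transportCost {M : Type*} [MetricSpace M]
    [MeasurableSpace M] [OpensMeasurableSpace M] {C : ℝ → ℝ} (hmono : MonotoneOn C (Ici 0))
    (hcont : ContinuousOn C (Ici 0)) (hCnonneg : ∀ x ∈ Ici (0:ℝ), 0 ≤ C x) {lam : ℝ}
    (hlam : 0 ≤ lam) (hdbl : ∀ y : ℝ, 0 ≤ y → C (2 * y) ≤ lam * C y)
    (hpos : ∀ t, 0 < t → 0 < C t) {μn : ℕ → Measure M} {μ : Measure M} (a : M)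
    (hfin : ∫⁻ x, ENNReal.ofReal (C (dist x a)) ∂μ ≠ ∞)
    (hT : Tendsto (fun n => transportCost C (μn n) μ) atTop (nhds 0)) :
    Tendsto (fun n => ∫⁻ x, ENNReal.ofReal (C (dist x a)) ∂(μn n)) atTop
      (nhds (∫⁻ x, ENNReal.ofReal (C (dist x a)) ∂μ)) := by
  refine ENNReal.tendsto_of_le_add_mul hfin hT fun ε hε => ?_
  obtain ⟨e, -, he, heε⟩ := ENNReal.lt_iff_exists_real_btwn.1 (ENNReal.half_pos hε.ne')
  have htail := ENNReal.Tendsto.const_mul (tendsto_setLIntegral_compl_closedBall hfin a)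
    (Or.inr (ENNReal.ofReal_ne_top (r := lam + 1)))
  rw [mul_zero] at htail
  obtain ⟨R, hRε, hR⟩ :=
    ((htail.eventually (gt_mem_nhds (ENNReal.half_pos hε.ne'))).and (eventually_ge_atTop 0)).exists
  obtain ⟨L, hL, hC⟩ :=
    exists_le_add_of_doubling hmono hcont hCnonneg hlam hdbl hpos hR (ENNReal.ofReal_pos.1 he)
  refine ⟨ENNReal.ofReal L, ENNReal.ofReal_ne_top, fun n => ?_⟩
  obtain ⟨hle, hge⟩ := lintegral_le_add_transportCost hcont a (by linarith) hL
    (fun x y => hC _ _ _ dist_nonneg dist_nonneg (dist_triangle x y a)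
      (dist_triangle_left y a x)) (μn n) μ
  have herr := add_le_add heε.le hRε.le
  rw [ENNReal.add_halves] at herr
  exact ⟨hle.trans (by gcongr), hge.trans (by gcongr)⟩

theorem tendsto_moments_of_tendsto_transportCost_general
    {M : Type*} [MetricSpace M]
    [MeasurableSpace M] [BorelSpace M]
    (C : ℝ → ℝ) (hmono : MonotoneOn C (Ici 0)) (hcont : ContinuousOn C (Ici 0))
    (hCnonneg : ∀ x ∈ Ici (0:ℝ), 0 ≤ C x)
    (lam : ℝ) (hlam : 0 < lam) (hdbl : ∀ y : ℝ, 0 ≤ y → C (2 * y) ≤ lam * C y)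
    (μn : ℕ → Measure M) (μ : Measure M)
    (a : M)
    (hint : Integrable (fun x => C (2 * dist x a)) μ)
    (hT : Tendsto (fun n => transportCost C (μn n) μ) atTop (nhds 0)) :
    Tendsto (fun n => ∫ x, C (dist x a) ∂(μn n)) atTop
      (nhds (∫ x, C (dist x a) ∂μ)) := by
  rcases eqOn_zero_or_pos_of_doubling hmono hCnonneg hlam.le hdbl with hzero | hpos
  · have h0 (x : M) : C (dist x a) = 0 := hzero (dist_nonneg : (0 : ℝ) ≤ dist x a)
    simp [h0]
  have hrepr (ν : Measure M) :
      ∫ x, C (dist x a) ∂ν = (∫⁻ x, ENNReal.ofReal (C (dist x a)) ∂ν).toReal :=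
    integral_eq_lintegral_of_nonneg_ae (Eventually.of_forall fun _ => hCnonneg _ dist_nonneg)
      (hcont.comp_continuous (continuous_id.dist continuous_const)
        fun _ => dist_nonneg).aestronglyMeasurable
  have hfin : ∫⁻ x, ENNReal.ofReal (C (dist x a)) ∂μ ≠ ∞ :=
    ne_top_of_le_ne_top hint.lintegral_lt_top.ne <| lintegral_mono fun x =>
      ENNReal.ofReal_le_ofReal <| hmono dist_nonneg (mem_Ici.2 (by positivity))
        (by linarith [dist_nonneg (x := x) (y := a)])
  simp only [hrepr]
  exact (ENNReal.tendsto_toReal hfin).comp <|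
    tendsto_lintegral_of_tendsto_transportCost hmono hcont hCnonneg hlam.le hdbl hpos a hfin hT

theorem tendsto_moments_of_tendsto_transportCost
    {M : Type*} [MetricSpace M] [CompleteSpace M] [TopologicalSpace.SeparableSpace M]
    [MeasurableSpace M] [BorelSpace M]
    (C : ℝ → ℝ) (hmono : MonotoneOn C (Ici 0)) (hcont : ContinuousOn C (Ici 0))
    (hC0 : C 0 = 0) (hCnonneg : ∀ x ∈ Ici (0:ℝ), 0 ≤ C x)
    (lam : ℝ) (hlam : 0 < lam) (hdbl : ∀ y : ℝ, 0 ≤ y → C (2 * y) ≤ lam * C y)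
    (μn : ℕ → Measure M) (μ : Measure M)
    [∀ n, IsProbabilityMeasure (μn n)] [IsProbabilityMeasure μ]
    (a : M)
    (hint_n : ∀ n, Integrable (fun x => C (2 * dist x a)) (μn n))
    (hint : Integrable (fun x => C (2 * dist x a)) μ)
    (hT : Tendsto (fun n => transportCost C (μn n) μ) atTop (nhds 0)) :
    Tendsto (fun n => ∫ x, C (dist x a) ∂(μn n)) atTop
      (nhds (∫ x, C (dist x a) ∂μ)) :=
  tendsto_moments_of_tendsto_transportCost_general C hmono hcont hCnonneg lam hlam hdbl μn μ a hint
    hT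
end
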